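/- arXiv:1308.5279 — 3 statements merged into one kernel-verified Lean document; each statement's English description precedes it below -/
import Mathlib

section
/- The complex-antilinear map j₁ on ℂ^{2^m} defined on the basis u(ε₁,…,ε_m) by j₁ u(ε₁,…,ε_m) = (√(-1))^{Σ_{α=1}^m (m-α+1) ε_α} u(-ε₁,…,-ε_m) satisfies j₁ ∘ j₁ = (-1)^{m(m+1)/2} · Id, and moreover j₀ ∘ j₁ = j₁ ∘ j₀, where j₀ is the antilinear map with j₀ u(ε₁,…,ε_m) = (√(-1))^{Σ α ε_α} u(-ε₁,…,-ε_m). -/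
/-!
The vectors `u(ε)` span `ℂ^{2^m}`: summing `conj u(ε)_k · u(ε)` over all sign patterns
factorises over the tensor factors into `∏ᵢ δ(kᵢ, k'ᵢ)`, so every standard basis vector lies in
their span. Two antilinear maps therefore agree once they agree on every `u(ε)`. Both `j₀` and
`j₁` send `u(ε)` to `i^{s(ε)} u(-ε)` with `s(-ε) = -s(ε)`; hence
`j j' u(ε) = conj(i^{s'(ε)}) i^{s(-ε)} u(ε) = i^{-(s(ε) + s'(ε))} u(ε)`, which is symmetric in
`j, j'`, and for `j = j' = j₁` equals `(-1)^{s(ε)} u(ε)`. Modulo 2, `s(ε)` is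
`∑_α (m - α) = m(m+1)/2` independently of the signs.
-/

open Complex

/-- `u(ε) = (1/√2)(1, -ε i) ∈ ℂ²`. -/
noncomputable def uVec (ε : ℝ) : Fin 2 → ℂ :=
  ![(Real.sqrt 2 : ℂ)⁻¹, -(ε : ℂ) * Complex.I * (Real.sqrt 2 : ℂ)⁻¹]

/-- `u(ε₁, …, ε_m) = u(ε₁) ⊗ ⋯ ⊗ u(ε_m)`, realized in the coordinate model
`ℂ^{2^m} = EuclideanSpace ℂ (Fin m → Fin 2)` of the `m`-fold tensor power of `ℂ²`,
where a sign pattern is encoded by `ε : Fin m → Bool` (`true ↦ +1`, `false ↦ -1`). -/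
noncomputable def uTensor (m : ℕ) (ε : Fin m → Bool) :
    EuclideanSpace ℂ (Fin m → Fin 2) :=
  WithLp.toLp 2 (fun k => ∏ i : Fin m, uVec (if ε i then 1 else -1) (k i))

open ComplexConjugate

theorem sum_bool_conj_uVec_mul_uVec (a a' : Fin 2) :
    ∑ b : Bool, conj (uVec (if b then 1 else -1) a) * uVec (if b then 1 else -1) a' =
      if a = a' then 1 else 0 := by
  have hsqrt : (Real.sqrt 2 : ℂ)⁻¹ * (Real.sqrt 2 : ℂ)⁻¹ = 1 / 2 := by
    rw [← mul_inv, ← ofReal_mul, Real.mul_self_sqrt zero_le_two]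
    norm_num
  fin_cases a <;> fin_cases a' <;> norm_num [uVec, mul_mul_mul_comm, hsqrt]

theorem single_eq_sum_uTensor (m : ℕ) (k : Fin m → Fin 2) :
    EuclideanSpace.single k (1 : ℂ) =
      ∑ ε, (∏ i, conj (uVec (if ε i then 1 else -1) (k i))) • uTensor m ε := by
  ext k'
  calc EuclideanSpace.single k (1 : ℂ) k'
      = ∏ i, if k i = k' i then 1 else 0 := by
        simp [Finset.prod_boole, PiLp.single_apply, funext_iff, eq_comm]
    _ = ∏ i, ∑ b : Bool, conj (uVec (if b then 1 else -1) (k i)) *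
          uVec (if b then 1 else -1) (k' i) := by
        simp only [sum_bool_conj_uVec_mul_uVec]
    _ = ∑ ε : Fin m → Bool, ∏ i, conj (uVec (if ε i then 1 else -1) (k i)) *
          uVec (if ε i then 1 else -1) (k' i) := Fintype.prod_sum _
    _ = _ := by
        simp only [WithLp.ofLp_sum, Finset.sum_apply, PiLp.smul_apply, smul_eq_mul, uTensor,
          Finset.prod_mul_distrib]

theorem span_range_uTensor (m : ℕ) : Submodule.span ℂ (Set.range (uTensor m)) = ⊤ := by
  refine eq_top_iff.2 ((EuclideanSpace.basisFun _ ℂ).toBasis.span_eq.ge.trans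
    (Submodule.span_le.2 ?_))
  rintro _ ⟨k, rfl⟩
  rw [OrthonormalBasis.coe_toBasis, EuclideanSpace.basisFun_apply, single_eq_sum_uTensor]
  exact Submodule.sum_mem _ fun ε _ => Submodule.smul_mem _ _ (Submodule.subset_span ⟨ε, rfl⟩)

def signedSum {ι : Type*} [Fintype ι] (w : ι → ℤ) (ε : ι → Bool) : ℤ :=
  ∑ α, w α * if ε α then 1 else -1

section SignedSum

variable {ι : Type*} [Fintype ι] (w : ι → ℤ) (ε : ι → Bool)

theorem signedSum_not : signedSum w (fun α => !ε α) = -signedSum w ε := by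
  rw [signedSum, signedSum, ← Finset.sum_neg_distrib]
  exact Finset.sum_congr rfl fun α _ => by cases ε α <;> simp

theorem neg_one_zpow_signedSum : (-1 : ℂ) ^ signedSum w ε = (-1) ^ ∑ α, w α := by
  rw [← Int.cast_negOnePow, ← Int.cast_negOnePow, (Int.negOnePow_eq_iff _ _).2]
  rw [signedSum, ← Finset.sum_sub_distrib]
  exact Finset.even_sum _ fun α _ => by cases ε α <;> simp [Int.even_sub]

end SignedSum

theorem Fin.sum_univ_natCast_sub_val (m : ℕ) :
    ∑ α : Fin m, ((m : ℤ) - α) = ((m * (m + 1) / 2 : ℕ) : ℤ) := by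
  calc ∑ α : Fin m, ((m : ℤ) - α) = ∑ α : Fin m, ((α : ℤ) + 1) :=
        Fintype.sum_equiv Fin.revPerm _ _ fun α => by rw [Fin.revPerm_apply, Fin.val_rev]; omega
    _ = ((∑ i ∈ Finset.range (m + 1), i : ℕ) : ℤ) := by
        rw [Finset.sum_range_succ', Fin.sum_univ_eq_sum_range (fun i => (i : ℤ) + 1)]
        push_cast
        rw [add_zero]
    _ = _ := by rw [Finset.sum_range_id, Nat.add_sub_cancel, mul_comm]

theorem conj_I_zpow (n : ℤ) : conj (I ^ n) = I ^ (-n) := by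
  rw [map_zpow₀, conj_I, ← inv_I, inv_zpow']

section Antilinear

variable {ι E : Type*} [AddCommGroup E] [Module ℂ E] {v : ι → E} {τ : ι → ι}

theorem LinearMap.apply_apply_eq_I_zpow_smul {j j' : E →ₗ⋆[ℂ] E} {s s' : ι → ℤ}
    (hτ : Function.Involutive τ) (hs : ∀ i, s (τ i) = -s i)
    (hj : ∀ i, j (v i) = I ^ s i • v (τ i)) (hj' : ∀ i, j' (v i) = I ^ s' i • v (τ i))
    (i : ι) : j (j' (v i)) = I ^ (-(s i + s' i)) • v i := by
  rw [hj', LinearMap.map_smulₛₗ, hj, hτ, hs, smul_smul, conj_I_zpow, ← zpow_add₀ I_ne_zero,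
    neg_add, add_comm]

theorem LinearMap.comp_self_eq_smul_id {j : E →ₗ⋆[ℂ] E} {s : ι → ℤ} {c : ℂ}
    (hv : Submodule.span ℂ (Set.range v) = ⊤)
    (hτ : Function.Involutive τ) (hs : ∀ i, s (τ i) = -s i)
    (hj : ∀ i, j (v i) = I ^ s i • v (τ i)) (hc : ∀ i, (-1 : ℂ) ^ s i = c) :
    (j.comp j : E →ₗ[ℂ] E) = c • LinearMap.id := by
  refine LinearMap.ext_on_range hv fun i => ?_
  rw [LinearMap.comp_apply, j.apply_apply_eq_I_zpow_smul hτ hs hj hj, ← hc i, ← two_mul,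
    neg_mul_eq_mul_neg, zpow_mul, zpow_two, I_mul_I, zpow_neg, ← inv_zpow, inv_neg_one]
  rfl

theorem LinearMap.comp_comm_of_apply_eq_I_zpow_smul {j j' : E →ₗ⋆[ℂ] E} {s s' : ι → ℤ}
    (hv : Submodule.span ℂ (Set.range v) = ⊤)
    (hτ : Function.Involutive τ) (hs : ∀ i, s (τ i) = -s i) (hs' : ∀ i, s' (τ i) = -s' i)
    (hj : ∀ i, j (v i) = I ^ s i • v (τ i)) (hj' : ∀ i, j' (v i) = I ^ s' i • v (τ i)) :
    (j.comp j' : E →ₗ[ℂ] E) = j'.comp j := by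
  refine LinearMap.ext_on_range hv fun i => ?_
  rw [LinearMap.comp_apply, LinearMap.comp_apply, j.apply_apply_eq_I_zpow_smul hτ hs hj hj',
    j'.apply_apply_eq_I_zpow_smul hτ hs' hj' hj, add_comm]

end Antilinear

theorem j1_squared_and_commutes_with_j0_general (m : ℕ)
    (j0 j1 : EuclideanSpace ℂ (Fin m → Fin 2) → EuclideanSpace ℂ (Fin m → Fin 2))
    (hadd0 : ∀ x y, j0 (x + y) = j0 x + j0 y)
    (hconj0 : ∀ (c : ℂ) x, j0 (c • x) = (starRingEnd ℂ c) • j0 x)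
    (hbasis0 : ∀ ε : Fin m → Bool,
      j0 (uTensor m ε) =
        (Complex.I ^ (∑ α : Fin m, ((α : ℤ) + 1) * (if ε α then 1 else -1))) •
          uTensor m (fun α => !(ε α)))
    (hadd1 : ∀ x y, j1 (x + y) = j1 x + j1 y)
    (hconj1 : ∀ (c : ℂ) x, j1 (c • x) = (starRingEnd ℂ c) • j1 x)
    (hbasis1 : ∀ ε : Fin m → Bool,
      j1 (uTensor m ε) =
        (Complex.I ^ (∑ α : Fin m, ((m : ℤ) - (α : ℤ)) * (if ε α then 1 else -1))) •
          uTensor m (fun α => !(ε α))) :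
    (∀ x, j1 (j1 x) = ((-1 : ℂ) ^ (m * (m + 1) / 2)) • x) ∧
      (∀ x, j0 (j1 x) = j1 (j0 x)) := by
  let J0 : EuclideanSpace ℂ (Fin m → Fin 2) →ₗ⋆[ℂ] EuclideanSpace ℂ (Fin m → Fin 2) :=
    { toFun := j0, map_add' := hadd0, map_smul' := hconj0 }
  let J1 : EuclideanSpace ℂ (Fin m → Fin 2) →ₗ⋆[ℂ] EuclideanSpace ℂ (Fin m → Fin 2) :=
    { toFun := j1, map_add' := hadd1, map_smul' := hconj1 }
  have hflip : Function.Involutive fun (ε : Fin m → Bool) α => !ε α :=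
    fun ε => funext fun α => Bool.not_not (ε α)
  have hsign (ε : Fin m → Bool) :
      (-1 : ℂ) ^ signedSum (fun α : Fin m => (m : ℤ) - α) ε = (-1) ^ (m * (m + 1) / 2) := by
    rw [neg_one_zpow_signedSum, Fin.sum_univ_natCast_sub_val, zpow_natCast]
  have hsquare := J1.comp_self_eq_smul_id (span_range_uTensor m) hflip (signedSum_not _)
    hbasis1 hsign
  have hcomm := J0.comp_comm_of_apply_eq_I_zpow_smul (j' := J1) (span_range_uTensor m) hflip
    (signedSum_not _) (signedSum_not fun α : Fin m => (m : ℤ) - α) hbasis0 hbasis1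
  exact ⟨LinearMap.congr_fun hsquare, LinearMap.congr_fun hcomm⟩

/-- The complex-antilinear map `j₁` with
`j₁ u(ε₁,…,ε_m) = i^{Σ (m-α+1) ε_α} u(-ε₁,…,-ε_m)` satisfies
`j₁ ∘ j₁ = (-1)^{m(m+1)/2}·Id`, and `j₀ ∘ j₁ = j₁ ∘ j₀`. -/
theorem j1_squared_and_commutes_with_j0 (m : ℕ) (hm : 1 ≤ m)
    (j0 j1 : EuclideanSpace ℂ (Fin m → Fin 2) → EuclideanSpace ℂ (Fin m → Fin 2))
    (hadd0 : ∀ x y, j0 (x + y) = j0 x + j0 y)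
    (hconj0 : ∀ (c : ℂ) x, j0 (c • x) = (starRingEnd ℂ c) • j0 x)
    (hbasis0 : ∀ ε : Fin m → Bool,
      j0 (uTensor m ε) =
        (Complex.I ^ (∑ α : Fin m, ((α : ℤ) + 1) * (if ε α then 1 else -1))) •
          uTensor m (fun α => !(ε α)))
    (hadd1 : ∀ x y, j1 (x + y) = j1 x + j1 y)
    (hconj1 : ∀ (c : ℂ) x, j1 (c • x) = (starRingEnd ℂ c) • j1 x)
    (hbasis1 : ∀ ε : Fin m → Bool,
      j1 (uTensor m ε) =
        (Complex.I ^ (∑ α : Fin m, ((m : ℤ) - (α : ℤ)) * (if ε α then 1 else -1))) •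
          uTensor m (fun α => !(ε α))) :
    (∀ x, j1 (j1 x) = ((-1 : ℂ) ^ (m * (m + 1) / 2)) • x) ∧
      (∀ x, j0 (j1 x) = j1 (j0 x)) :=
  j1_squared_and_commutes_with_j0_general m j0 j1 hadd0 hconj0 hbasis0 hadd1 hconj1 hbasis1
end

section
/- The antilinear maps j₀ and j₁ on Δ = ℂ^{2^m} are anti-unitary: for all φ, ψ ∈ Δ, ⟨j₀ψ, j₀φ⟩ = ⟨φ, ψ⟩ and ⟨j₁ψ, j₁φ⟩ = ⟨φ, ψ⟩, where ⟨·,·⟩ is the standard Hermitian inner product. -/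
/-!
The vectors `u(ε)`, `ε ∈ {±1}^m`, form an orthonormal basis of `ℂ^{2^m}`: `u(1)` and `u(-1)` are
orthonormal in `ℂ²`, and inner products of pure tensors factor. Both `j₀` and `j₁` send this basis
to itself, permuted by `ε ↦ -ε` and multiplied by powers of `i`, so to an orthonormal family; a
conjugate-linear map with that property is anti-unitary.
-/

open Complex

section

variable {𝕜 E F : Type*} [RCLike 𝕜] [NormedAddCommGroup E] [InnerProductSpace 𝕜 E]
  [NormedAddCommGroup F] [InnerProductSpace 𝕜 F]

theorem Orthonormal.smul_of_norm_eq_one {ι : Type*} {v : ι → F} (hv : Orthonormal 𝕜 v)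
    {c : ι → 𝕜} (hc : ∀ i, ‖c i‖ = 1) : Orthonormal 𝕜 fun i => c i • v i := by
  classical
  rw [orthonormal_iff_ite] at hv ⊢
  intro i i'
  rw [inner_smul_left, inner_smul_right, hv]
  split_ifs with h
  · subst h
    rw [mul_one, RCLike.conj_mul, hc, RCLike.ofReal_one, one_pow]
  · simp

theorem OrthonormalBasis.inner_map_map_of_orthonormal {ι : Type*} [Fintype ι]
    (b : OrthonormalBasis ι 𝕜 E) (j : E →ₗ⋆[𝕜] F) (hj : Orthonormal 𝕜 (j ∘ b)) (x y : E) :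
    inner 𝕜 (j x) (j y) = inner 𝕜 y x := by
  have hjb (z : E) : j z = ∑ i, star (b.repr z i) • (j ∘ b) i := by
    conv_lhs => rw [← b.sum_repr z]
    simp only [map_sum, LinearMap.map_smulₛₗ, RCLike.star_def, Function.comp_apply]
  rw [hjb x, hjb y, hj.inner_sum, ← b.repr.inner_map_map, PiLp.inner_apply]
  simp only [RCLike.star_def, RCLike.conj_conj, RCLike.inner_apply]

theorem EuclideanSpace.inner_toLp_prod {ι κ : Type*} [Fintype ι] [DecidableEq ι] [Fintype κ]
    (f g : ι → κ → 𝕜) :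
    inner 𝕜 (WithLp.toLp 2 fun k : ι → κ => ∏ i, f i (k i) : EuclideanSpace 𝕜 (ι → κ))
        (WithLp.toLp 2 fun k : ι → κ => ∏ i, g i (k i)) =
      ∏ i, inner 𝕜 (WithLp.toLp 2 (f i) : EuclideanSpace 𝕜 κ) (WithLp.toLp 2 (g i)) := by
  simp only [PiLp.inner_apply, RCLike.inner_apply, map_prod, ← Finset.prod_mul_distrib]
  rw [Finset.prod_univ_sum, Fintype.piFinset_univ]

end

theorem inner_uVec (ε ε' : ℝ) :
    inner ℂ (WithLp.toLp 2 (uVec ε) : EuclideanSpace ℂ (Fin 2)) (WithLp.toLp 2 (uVec ε')) =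
      (1 + ε * ε') / 2 := by
  have hsqrt : (Real.sqrt 2 : ℂ) ^ 2 = 2 := by
    rw [← ofReal_pow, Real.sq_sqrt zero_le_two, ofReal_ofNat]
  simp only [PiLp.inner_apply, RCLike.inner_apply, Fin.sum_univ_two, uVec, Matrix.cons_val_zero,
    Matrix.cons_val_one, map_mul, map_neg, map_inv₀, conj_ofReal, conj_I]
  field_simp
  linear_combination (-(1 + (ε' : ℂ) * ε)) * hsqrt - 2 * (ε' : ℂ) * ε * I_sq

theorem uTensor_orthonormal (m : ℕ) : Orthonormal ℂ (uTensor m) := by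
  rw [orthonormal_iff_ite]
  intro ε ε'
  have hsign (b b' : Bool) :
      (1 + ((if b then 1 else -1 : ℝ) : ℂ) * ((if b' then 1 else -1 : ℝ) : ℂ)) / 2 =
        if b = b' then 1 else 0 := by
    cases b <;> cases b' <;> norm_num
  simp only [uTensor, EuclideanSpace.inner_toLp_prod, inner_uVec, hsign, Finset.prod_boole,
    Finset.mem_univ, forall_const, funext_iff]

noncomputable def uTensorBasis (m : ℕ) :
    OrthonormalBasis (Fin m → Bool) ℂ (EuclideanSpace ℂ (Fin m → Fin 2)) :=
  OrthonormalBasis.mk (uTensor_orthonormal m)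
    ((uTensor_orthonormal m).linearIndependent.span_eq_top_of_card_eq_finrank
      (by simp [finrank_euclideanSpace])).ge

theorem coe_uTensorBasis (m : ℕ) : ⇑(uTensorBasis m) = uTensor m :=
  OrthonormalBasis.coe_mk _ _

theorem inner_map_map_of_map_uTensor {m : ℕ}
    (j : EuclideanSpace ℂ (Fin m → Fin 2) →ₗ⋆[ℂ] EuclideanSpace ℂ (Fin m → Fin 2))
    (c : (Fin m → Bool) → ℂ) (hc : ∀ ε, ‖c ε‖ = 1)
    (hj : ∀ ε, j (uTensor m ε) = c ε • uTensor m (fun α => !(ε α)))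
    (x y : EuclideanSpace ℂ (Fin m → Fin 2)) :
    inner ℂ (j x) (j y) = inner ℂ y x := by
  have hflip : Function.Injective fun (ε : Fin m → Bool) (α : Fin m) => !(ε α) :=
    Function.Involutive.injective fun ε => funext fun α => Bool.not_not (ε α)
  refine (uTensorBasis m).inner_map_map_of_orthonormal j ?_ x y
  rw [coe_uTensorBasis]
  convert ((uTensor_orthonormal m).comp _ hflip).smul_of_norm_eq_one hc using 1
  exact funext hj

theorem j0_j1_antiunitary_general (m : ℕ)
    (j0 j1 : EuclideanSpace ℂ (Fin m → Fin 2) → EuclideanSpace ℂ (Fin m → Fin 2))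
    (hadd0 : ∀ x y, j0 (x + y) = j0 x + j0 y)
    (hconj0 : ∀ (c : ℂ) x, j0 (c • x) = (starRingEnd ℂ c) • j0 x)
    (hbasis0 : ∀ ε : Fin m → Bool,
      j0 (uTensor m ε) =
        (Complex.I ^ (∑ α : Fin m, ((α : ℤ) + 1) * (if ε α then 1 else -1))) •
          uTensor m (fun α => !(ε α)))
    (hadd1 : ∀ x y, j1 (x + y) = j1 x + j1 y)
    (hconj1 : ∀ (c : ℂ) x, j1 (c • x) = (starRingEnd ℂ c) • j1 x)
    (hbasis1 : ∀ ε : Fin m → Bool,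
      j1 (uTensor m ε) =
        (Complex.I ^ (∑ α : Fin m, ((m : ℤ) - (α : ℤ)) * (if ε α then 1 else -1))) •
          uTensor m (fun α => !(ε α))) :
    ∀ φ ψ : EuclideanSpace ℂ (Fin m → Fin 2),
      (inner ℂ (j0 ψ) (j0 φ) : ℂ) = inner ℂ φ ψ ∧
      (inner ℂ (j1 ψ) (j1 φ) : ℂ) = inner ℂ φ ψ := by
  have hphase (n : ℤ) : ‖Complex.I ^ n‖ = 1 := by rw [norm_zpow, norm_I, one_zpow]
  intro φ ψ
  exact ⟨inner_map_map_of_map_uTensor { toFun := j0, map_add' := hadd0, map_smul' := hconj0 } _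
      (fun _ => hphase _) hbasis0 ψ φ,
    inner_map_map_of_map_uTensor { toFun := j1, map_add' := hadd1, map_smul' := hconj1 } _
      (fun _ => hphase _) hbasis1 ψ φ⟩

/-- The antilinear maps `j₀` and `j₁` are anti-unitary:
`⟨jψ, jφ⟩ = ⟨φ, ψ⟩` for the standard Hermitian inner product on `ℂ^{2^m}`. -/
theorem j0_j1_antiunitary (m : ℕ) (hm : 1 ≤ m)
    (j0 j1 : EuclideanSpace ℂ (Fin m → Fin 2) → EuclideanSpace ℂ (Fin m → Fin 2))
    (hadd0 : ∀ x y, j0 (x + y) = j0 x + j0 y)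
    (hconj0 : ∀ (c : ℂ) x, j0 (c • x) = (starRingEnd ℂ c) • j0 x)
    (hbasis0 : ∀ ε : Fin m → Bool,
      j0 (uTensor m ε) =
        (Complex.I ^ (∑ α : Fin m, ((α : ℤ) + 1) * (if ε α then 1 else -1))) •
          uTensor m (fun α => !(ε α)))
    (hadd1 : ∀ x y, j1 (x + y) = j1 x + j1 y)
    (hconj1 : ∀ (c : ℂ) x, j1 (c • x) = (starRingEnd ℂ c) • j1 x)
    (hbasis1 : ∀ ε : Fin m → Bool,
      j1 (uTensor m ε) =
        (Complex.I ^ (∑ α : Fin m, ((m : ℤ) - (α : ℤ)) * (if ε α then 1 else -1))) •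
          uTensor m (fun α => !(ε α))) :
    ∀ φ ψ : EuclideanSpace ℂ (Fin m → Fin 2),
      (inner ℂ (j0 ψ) (j0 φ) : ℂ) = inner ℂ φ ψ ∧
      (inner ℂ (j1 ψ) (j1 φ) : ℂ) = inner ℂ φ ψ :=
  j0_j1_antiunitary_general m j0 j1 hadd0 hconj0 hbasis0 hadd1 hconj1 hbasis1
end

section
/- Let A : H₁ → H₁ and B : H₂ → H₂ be self-adjoint operators on complex Hilbert spaces, each diagonalizable by an orthonormal basis of eigenvectors. Let Γ_ρ(A) and Γ_ν(B) denote the eigenspaces for eigenvalues ρ and ν. Then on the Hilbert tensor product H₁ ⊗ H₂, the eigenspace of A ⊗ Id + Id ⊗ B for eigenvalue γ equals the closure of the direct sum, over all pairs (χ, ν) with χ + ν = γ, of Γ_χ(A) ⊗ Γ_ν(B). -/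
/-!
An elementary tensor `t x y` of eigenvectors `x ∈ Γ_χ(A)`, `y ∈ Γ_ν(B)` is an eigenvector of `T`
for `χ + ν`, and such tensors span a dense subspace of `H` because `t` is continuous in each
variable. Since `T` is symmetric, its eigenspaces are mutually orthogonal, so a vector of the
`γ`-eigenspace orthogonal to the tensors with `χ + ν = γ` is orthogonal to all of them, hence zero.
-/

open Module.End Submodule

namespace Submodule

variable {R M N P : Type*} [CommRing R]
  [AddCommGroup M] [Module R M] [AddCommGroup N] [Module R N] [AddCommGroup P] [Module R P]

theorem span_setOf_eq_map₂ (f : M →ₗ[R] N →ₗ[R] P) (p : Submodule R M) (q : Submodule R N) :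
    span R {z | ∃ x ∈ p, ∃ y ∈ q, z = f x y} = map₂ f p q := by
  rw [map₂_eq_span_image2]
  congr 1
  ext z
  simp only [Set.mem_ofPred_eq, Set.mem_image2, SetLike.mem_coe, eq_comm (a := z)]

theorem map₂_eigenspace_le_eigenspace_add (f : M →ₗ[R] N →ₗ[R] P) {A : Module.End R M}
    {B : Module.End R N} {T : Module.End R P} (hT : ∀ x y, T (f x y) = f (A x) y + f x (B y))
    (χ ν : R) : map₂ f (eigenspace A χ) (eigenspace B ν) ≤ eigenspace T (χ + ν) := by
  refine map₂_le.mpr fun x hx y hy ↦ ?_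
  rw [mem_eigenspace_iff] at hx hy ⊢
  simp [hT, hx, hy, add_smul]

variable [TopologicalSpace M] [ContinuousAdd M] [ContinuousConstSMul R M]
  [TopologicalSpace N] [ContinuousAdd N] [ContinuousConstSMul R N]
  [TopologicalSpace P] [ContinuousAdd P] [ContinuousConstSMul R P]

theorem topologicalClosure_map₂_eq_top (f : M →ₗ[R] N →ₗ[R] P)
    (hf₁ : ∀ x, Continuous (f x)) (hf₂ : ∀ y, Continuous (f · y))
    (hf : (span R {z | ∃ x y, z = f x y}).topologicalClosure = ⊤) {p : Submodule R M}
    {q : Submodule R N} (hp : p.topologicalClosure = ⊤) (hq : q.topologicalClosure = ⊤) :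
    (map₂ f p q).topologicalClosure = ⊤ := by
  have hmem : ∀ x y, f x y ∈ closure (map₂ f p q : Set P) := fun x y ↦ by
    have hx : x ∈ closure (p : Set M) := by rw [← topologicalClosure_coe, hp]; trivial
    have hy : y ∈ closure (q : Set N) := by rw [← topologicalClosure_coe, hq]; trivial
    exact map_mem_closure₂' (f := fun a b ↦ f a b) hf₁ hf₂ hx hy fun a ha b hb ↦
      apply_mem_map₂ f ha hb
  rw [eq_top_iff, ← hf]
  refine topologicalClosure_minimal _ (span_le.mpr ?_) (isClosed_topologicalClosure _)
  rintro _ ⟨x, y, rfl⟩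
  exact hmem x y

end Submodule

section InnerProduct

variable {𝕜 E F G : Type*} [RCLike 𝕜]
  [NormedAddCommGroup E] [InnerProductSpace 𝕜 E]
  [NormedAddCommGroup F] [InnerProductSpace 𝕜 F]
  [NormedAddCommGroup G] [InnerProductSpace 𝕜 G]

local notation "⟪" x ", " y "⟫" => inner 𝕜 x y

theorem LinearMap.norm_apply_apply_of_inner_apply_apply (t : E →ₗ[𝕜] F →ₗ[𝕜] G)
    (ht : ∀ x x' y y', ⟪t x y, t x' y'⟫ = ⟪x, x'⟫ * ⟪y, y'⟫) (x : E) (y : F) :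
    ‖t x y‖ = ‖x‖ * ‖y‖ := by
  have h := ht x x y y
  simp only [inner_self_eq_norm_sq_to_K] at h
  have : ‖t x y‖ ^ 2 = (‖x‖ * ‖y‖) ^ 2 := by rw [mul_pow]; exact_mod_cast h
  exact (pow_left_inj₀ (norm_nonneg _) (by positivity) two_ne_zero).mp this

theorem ContinuousLinearMap.inner_map_eq_of_dense_span {T : E →L[𝕜] E} {s : Set E}
    (hs : (span 𝕜 s).topologicalClosure = ⊤) {x : E}
    (hx : ∀ y ∈ s, ⟪T x, y⟫ = ⟪x, T y⟫) (y : E) : ⟪T x, y⟫ = ⟪x, T y⟫ := by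
  have hdense : Dense (span 𝕜 s : Set E) :=
    dense_iff_topologicalClosure_eq_top.mpr hs
  have := ContinuousLinearMap.ext_on hdense (f := innerSL 𝕜 (T x)) (g := (innerSL 𝕜 x).comp T) hx
  exact congrArg (· y) this

theorem ContinuousLinearMap.isSymmetric_of_dense_span {T : E →L[𝕜] E} {s : Set E}
    (hs : (span 𝕜 s).topologicalClosure = ⊤)
    (hT : ∀ x ∈ s, ∀ y ∈ s, ⟪T x, y⟫ = ⟪x, T y⟫) : (T : E →ₗ[𝕜] E).IsSymmetric := by
  have hleft : ∀ x ∈ s, ∀ y, ⟪T x, y⟫ = ⟪x, T y⟫ := fun x hx ↦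
    inner_map_eq_of_dense_span hs (hT x hx)
  refine fun x ↦ inner_map_eq_of_dense_span hs fun y hy ↦ ?_
  rw [← inner_conj_symm, ← hleft y hy x, inner_conj_symm]

theorem ContinuousLinearMap.eigenspace_eq_topologicalClosure_iSup [CompleteSpace E]
    {T : E →L[𝕜] E} (hT : (T : E →ₗ[𝕜] E).IsSymmetric) {ι : Type*} {V : ι → Submodule 𝕜 E}
    {μ : ι → 𝕜} (hV : ∀ i, V i ≤ eigenspace (T : E →ₗ[𝕜] E) (μ i))
    (hdense : (⨆ i, V i).topologicalClosure = ⊤) (γ : 𝕜) :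
    eigenspace (T : E →ₗ[𝕜] E) γ = (⨆ i, ⨆ _ : μ i = γ, V i).topologicalClosure := by
  set K := (⨆ i, ⨆ _ : μ i = γ, V i).topologicalClosure
  have hK : K ≤ eigenspace (T : E →ₗ[𝕜] E) γ :=
    topologicalClosure_minimal _ (iSup₂_le fun i hi ↦ hi ▸ hV i) (T.isClosed_eigenspace γ)
  have hortho : ∀ i, V i ⟂ Kᗮ ⊓ eigenspace (T : E →ₗ[𝕜] E) γ := fun i ↦ by
    by_cases hi : μ i = γ
    · refine (isOrtho_orthogonal_right K).mono ?_ inf_le_left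
      exact (le_iSup₂_of_le (f := fun i (_ : μ i = γ) ↦ V i) i hi le_rfl).trans
        (le_topologicalClosure _)
    · exact ((hT.orthogonalFamily_eigenspaces.isOrtho hi).mono (hV i) le_rfl).mono_right inf_le_right
  have hbot : Kᗮ ⊓ eigenspace (T : E →ₗ[𝕜] E) γ = ⊥ := by
    rw [← orthogonal_eq_top_iff, eq_top_iff, ← hdense]
    exact topologicalClosure_minimal _
      (isOrtho_iff_le.mp (isOrtho_iSup_left.mpr hortho))
      (isClosed_orthogonal _)
  rw [← sup_orthogonal_inf_of_hasOrthogonalProjection hK, hbot, sup_bot_eq]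

end InnerProduct

theorem eigenspace_of_tensor_sum_general {H₁ H₂ H : Type*}
    [NormedAddCommGroup H₁] [InnerProductSpace ℂ H₁]
    [NormedAddCommGroup H₂] [InnerProductSpace ℂ H₂]
    [NormedAddCommGroup H] [InnerProductSpace ℂ H] [CompleteSpace H]
    (t : H₁ →ₗ[ℂ] H₂ →ₗ[ℂ] H)
    (hinner : ∀ (x₁ y₁ : H₁) (x₂ y₂ : H₂),
      (inner ℂ (t x₁ x₂) (t y₁ y₂) : ℂ) = inner ℂ x₁ y₁ * inner ℂ x₂ y₂)
    (hdense : (Submodule.span ℂ {z : H | ∃ x₁ x₂, z = t x₁ x₂}).topologicalClosure = ⊤)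
    (A : H₁ →ₗ[ℂ] H₁) (B : H₂ →ₗ[ℂ] H₂)
    (hsymA : ∀ x y : H₁, (inner ℂ (A x) y : ℂ) = inner ℂ x (A y))
    (hsymB : ∀ x y : H₂, (inner ℂ (B x) y : ℂ) = inner ℂ x (B y))
    (hA : (⨆ ρ : ℂ, Module.End.eigenspace A ρ).topologicalClosure = ⊤)
    (hB : (⨆ ν : ℂ, Module.End.eigenspace B ν).topologicalClosure = ⊤)
    (T : H →L[ℂ] H)
    (hT : ∀ (x : H₁) (y : H₂), T (t x y) = t (A x) y + t x (B y)) :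
    ∀ γ : ℂ,
      Module.End.eigenspace (T : H →ₗ[ℂ] H) γ =
        (⨆ p : ℂ × ℂ, ⨆ _ : p.1 + p.2 = γ,
          Submodule.span ℂ {z : H | ∃ x ∈ Module.End.eigenspace A p.1,
            ∃ y ∈ Module.End.eigenspace B p.2, z = t x y}).topologicalClosure := by
  have hnorm := t.norm_apply_apply_of_inner_apply_apply hinner
  have ht₁ : ∀ x, Continuous (t x) := fun x ↦
    ((t x).mkContinuous ‖x‖ fun y ↦ (hnorm x y).le).continuous
  have ht₂ : ∀ y, Continuous (t · y) := fun y ↦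
    ((t.flip y).mkContinuous ‖y‖ fun x ↦ (hnorm x y).trans_le (mul_comm _ _).le).continuous
  have hTsym : (T : H →ₗ[ℂ] H).IsSymmetric := by
    refine T.isSymmetric_of_dense_span hdense ?_
    rintro _ ⟨x, y, rfl⟩ _ ⟨x', y', rfl⟩
    rw [hT, hT, inner_add_left, inner_add_right, hinner, hinner, hinner, hinner, hsymA, hsymB]
  have hsum : (⨆ p : ℂ × ℂ, map₂ t (eigenspace A p.1) (eigenspace B p.2)).topologicalClosure
      = ⊤ := by
    rw [iSup_prod]
    simp_rw [← map₂_iSup_right, ← map₂_iSup_left]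
    exact topologicalClosure_map₂_eq_top t ht₁ ht₂ hdense hA hB
  intro γ
  simpa only [span_setOf_eq_map₂] using T.eigenspace_eq_topologicalClosure_iSup hTsym
    (fun p : ℂ × ℂ ↦ map₂_eigenspace_le_eigenspace_add t hT p.1 p.2) hsum γ

/-- Eigenspace decomposition of `A ⊗ Id + Id ⊗ B` on the Hilbert tensor product:
the eigenspace for eigenvalue `γ` is the closure of the sum, over pairs
`(χ, ν)` with `χ + ν = γ`, of the spans of tensors of eigenvectors. -/
theorem eigenspace_of_tensor_sum {H₁ H₂ H : Type*}
    [NormedAddCommGroup H₁] [InnerProductSpace ℂ H₁] [CompleteSpace H₁]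
    [NormedAddCommGroup H₂] [InnerProductSpace ℂ H₂] [CompleteSpace H₂]
    [NormedAddCommGroup H] [InnerProductSpace ℂ H] [CompleteSpace H]
    (t : H₁ →ₗ[ℂ] H₂ →ₗ[ℂ] H)
    (hinner : ∀ (x₁ y₁ : H₁) (x₂ y₂ : H₂),
      (inner ℂ (t x₁ x₂) (t y₁ y₂) : ℂ) = inner ℂ x₁ y₁ * inner ℂ x₂ y₂)
    (hdense : (Submodule.span ℂ {z : H | ∃ x₁ x₂, z = t x₁ x₂}).topologicalClosure = ⊤)
    (A : H₁ →ₗ[ℂ] H₁) (B : H₂ →ₗ[ℂ] H₂)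
    (hsymA : ∀ x y : H₁, (inner ℂ (A x) y : ℂ) = inner ℂ x (A y))
    (hsymB : ∀ x y : H₂, (inner ℂ (B x) y : ℂ) = inner ℂ x (B y))
    (hA : (⨆ ρ : ℂ, Module.End.eigenspace A ρ).topologicalClosure = ⊤)
    (hB : (⨆ ν : ℂ, Module.End.eigenspace B ν).topologicalClosure = ⊤)
    (T : H →L[ℂ] H)
    (hT : ∀ (x : H₁) (y : H₂), T (t x y) = t (A x) y + t x (B y)) :
    ∀ γ : ℂ,
      Module.End.eigenspace (T : H →ₗ[ℂ] H) γ =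
        (⨆ p : ℂ × ℂ, ⨆ _ : p.1 + p.2 = γ,
          Submodule.span ℂ {z : H | ∃ x ∈ Module.End.eigenspace A p.1,
            ∃ y ∈ Module.End.eigenspace B p.2, z = t x y}).topologicalClosure :=
  eigenspace_of_tensor_sum_general t hinner hdense A B hsymA hsymB hA hB T hT
end
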